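/- Let u_θ be an MLP with scalar input and output in which all hidden layers have the same width d (d₁ = ⋯ = d_L = d), with all biases equal to zero, and suppose the entries of the weight matrices W⁽¹⁾,…,W⁽ᴸ⁺¹⁾ are jointly independent square-integrable real random variables on a probability space, each with mean zero, where every entry of W⁽¹⁾ has variance 2/(d+1) and every entry of W⁽ˡ⁾ for 2 ≤ l ≤ L has variance 1/d. Assume σ : ℝ → ℝ is differentiable with measurable derivative satisfying |σ'(t)| ≤ 1 for all t ∈ ℝ. Fix x ∈ ℝ and for l = 1,…,L define the random vector X⁽ˡ⁾(x) ∈ ℝ^d by X⁽¹⁾(x) = W⁽¹⁾ and X⁽ˡ⁾(x) = W⁽ˡ⁾ · diag(σ'(u⁽ˡ⁻¹⁾(x))) · X⁽ˡ⁻¹⁾(x) for 2 ≤ l ≤ L. Then for every l ∈ {1,…,L} and every component k ∈ {1,…,d}, the random variable X⁽ˡ⁾_k(x) is square-integrable with 𝔼[X⁽ˡ⁾_k(x)] = 0 and Var(X⁽ˡ⁾_k(x)) ≤ 2/(d+1). -/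

import Mathlib

/-!
Induction on the layer. Write `X⁽ˡ⁺¹⁾_i = ∑ₖ W⁽ˡ⁺¹⁾_{ik} Yₖ` with `Yₖ = σ'(u⁽ˡ⁾ₖ) X⁽ˡ⁾ₖ`. The `Yₖ`
are functions of the weights of layers `≤ l` only, so the entry `W⁽ˡ⁺¹⁾_{ik}` is independent of
all of them and of the other entries of its row. Being centred, it kills the mean and every cross
term of the second moment, leaving `Var X⁽ˡ⁺¹⁾_i = ∑ₖ Var W⁽ˡ⁺¹⁾_{ik} 𝔼[Yₖ²]`; as `|σ'| ≤ 1`,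
`𝔼[Yₖ²] ≤ Var X⁽ˡ⁾ₖ ≤ 2/(m+1)`, and the `m` terms of variance `1/m` give the bound again.
-/

open Matrix MeasureTheory ProbabilityTheory

/-- The pre-activation values `u⁽ˡ⁺¹⁾(x)` of an MLP with scalar input,
dimensions `d`, weights `W`, biases `b` and activation `σ`:
`u⁽¹⁾(x) = W⁽¹⁾ x + b⁽¹⁾` and `u⁽ˡ⁺¹⁾(x) = W⁽ˡ⁺¹⁾ σ(u⁽ˡ⁾(x)) + b⁽ˡ⁺¹⁾`.
Here `mlpPre d W b σ l` is `u⁽ˡ⁺¹⁾`, so `W l` is the weight matrix `W⁽ˡ⁺¹⁾`. -/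
noncomputable def mlpPre (d : ℕ → ℕ)
    (W : (l : ℕ) → Matrix (Fin (d (l + 1))) (Fin (d l)) ℝ)
    (b : (l : ℕ) → Fin (d (l + 1)) → ℝ) (σ : ℝ → ℝ) :
    (l : ℕ) → ℝ → Fin (d (l + 1)) → ℝ
  | 0, x => W 0 *ᵥ (fun _ => x) + b 0
  | l + 1, x => W (l + 1) *ᵥ (fun i => σ (mlpPre d W b σ l x i)) + b (l + 1)

/-- The hidden-stack gradient `X⁽ˡ⁺¹⁾(x)` of the MLP, defined recursively by
`X⁽¹⁾(x) = W⁽¹⁾` (a `d₁ × 1` matrix, identified with a vector) and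
`X⁽ˡ⁺¹⁾(x) = W⁽ˡ⁺¹⁾ ⬝ diag(σ'(u⁽ˡ⁾(x))) ⬝ X⁽ˡ⁾(x)`.
Here `jacProd d W b σ x l` is `X⁽ˡ⁺¹⁾(x)`. -/
noncomputable def jacProd (d : ℕ → ℕ)
    (W : (l : ℕ) → Matrix (Fin (d (l + 1))) (Fin (d l)) ℝ)
    (b : (l : ℕ) → Fin (d (l + 1)) → ℝ) (σ : ℝ → ℝ) (x : ℝ) :
    (l : ℕ) → Matrix (Fin (d (l + 1))) (Fin (d 0)) ℝ
  | 0 => W 0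
  | l + 1 =>
      W (l + 1) * Matrix.diagonal (fun i => deriv σ (mlpPre d W b σ l x i)) *
        jacProd d W b σ x l

namespace ProbabilityTheory

variable {Ω : Type*} {mΩ : MeasurableSpace Ω} {μ : Measure Ω}

theorem iIndepFun.indep_comap_iSup_ne {ι β : Type*} [mβ : MeasurableSpace β] {f : ι → Ω → β}
    (hf : iIndepFun f μ) (hmeas : ∀ i, Measurable (f i)) (i : ι) :
    Indep (mβ.comap (f i)) (⨆ j ≠ i, mβ.comap (f j)) μ := by
  simpa using indep_iSup_of_disjoint (fun j => (hmeas j).comap_le) hf.iIndep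
    (disjoint_compl_right (a := ({i} : Set ι)))

theorem measurable_iSup_comap_of_ne {ι β : Type*} [mβ : MeasurableSpace β] (f : ι → Ω → β)
    {i j : ι} (hji : j ≠ i) : Measurable[⨆ k ≠ i, mβ.comap (f k)] (f j) :=
  Measurable.of_comap_le (le_iSup₂ (f := fun k (_ : k ≠ i) => mβ.comap (f k)) j hji)

theorem Indep.indepFun_of_measurable {β γ : Type*} [mβ : MeasurableSpace β] [MeasurableSpace γ]
    {m : MeasurableSpace Ω} {X : Ω → β} {Z : Ω → γ}
    (h : Indep (mβ.comap X) m μ) (hZ : Measurable[m] Z) : IndepFun X Z μ :=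
  (IndepFun_iff_Indep X Z μ).2 (indep_of_indep_of_le_right h hZ.comap_le)

theorem IndepFun.memLp_two_mul {X Y : Ω → ℝ} (h : IndepFun X Y μ) (hX : MemLp X 2 μ)
    (hY : MemLp Y 2 μ) : MemLp (X * Y) 2 μ := by
  rw [memLp_two_iff_integrable_sq (hX.aestronglyMeasurable.mul hY.aestronglyMeasurable)]
  convert (h.comp (measurable_id.pow_const 2) (measurable_id.pow_const 2)).integrable_mul
    hX.integrable_sq hY.integrable_sq using 1
  ext ω
  simp [mul_pow]

theorem IndepFun.integral_mul_eq_zero {X Y : Ω → ℝ} (h : IndepFun X Y μ)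
    (hX : AEStronglyMeasurable X μ) (hY : AEStronglyMeasurable Y μ) (hX0 : ∫ ω, X ω ∂μ = 0) :
    ∫ ω, X ω * Y ω ∂μ = 0 := by
  rw [h.integral_fun_mul_eq_mul_integral hX hY, hX0, zero_mul]

theorem IndepFun.variance_mul_of_integral_eq_zero {X Y : Ω → ℝ} (h : IndepFun X Y μ)
    (hX : MemLp X 2 μ) (hY : MemLp Y 2 μ) (hX0 : ∫ ω, X ω ∂μ = 0) :
    Var[X * Y; μ] = Var[X; μ] * ∫ ω, Y ω ^ 2 ∂μ := by
  have hsq := h.comp (measurable_id.pow_const 2) (measurable_id.pow_const 2)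
  rw [variance_of_integral_eq_zero (hX.aemeasurable.mul hY.aemeasurable)
      (h.integral_mul_eq_zero hX.aestronglyMeasurable hY.aestronglyMeasurable hX0),
    variance_of_integral_eq_zero hX.aemeasurable hX0]
  simpa [Function.comp_def, mul_pow] using hsq.integral_mul_eq_mul_integral
    hX.integrable_sq.aestronglyMeasurable hY.integrable_sq.aestronglyMeasurable

variable [IsProbabilityMeasure μ]

theorem moments_sum_mul_of_indep {ι : Type*} [Fintype ι] {w Y : ι → Ω → ℝ}
    (m : ι → MeasurableSpace Ω) (hw : ∀ k, MemLp (w k) 2 μ) (hY : ∀ k, MemLp (Y k) 2 μ)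
    (hw0 : ∀ k, ∫ ω, w k ω ∂μ = 0)
    (hind : ∀ k, Indep (MeasurableSpace.comap (w k) inferInstance) (m k) μ)
    (hYm : ∀ k k', Measurable[m k] (Y k')) (hwm : ∀ k k', k ≠ k' → Measurable[m k] (w k')) :
    MemLp (fun ω => ∑ k, w k ω * Y k ω) 2 μ ∧ ∫ ω, ∑ k, w k ω * Y k ω ∂μ = 0 ∧
      Var[fun ω => ∑ k, w k ω * Y k ω; μ] = ∑ k, Var[w k; μ] * ∫ ω, Y k ω ^ 2 ∂μ := by
  have hwY k : IndepFun (w k) (Y k) μ := (hind k).indepFun_of_measurable (hYm k k)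
  have hL2 k : MemLp (w k * Y k) 2 μ := (hwY k).memLp_two_mul (hw k) (hY k)
  have hmean k : μ[w k * Y k] = 0 :=
    (hwY k).integral_mul_eq_zero (hw k).aestronglyMeasurable (hY k).aestronglyMeasurable (hw0 k)
  have hcov k k' (hkk' : k ≠ k') : cov[w k * Y k, w k' * Y k'; μ] = 0 := by
    have hind' : IndepFun (w k) (w k' * (Y k * Y k')) μ :=
      (hind k).indepFun_of_measurable ((hwm k k' hkk').mul ((hYm k k).mul (hYm k k')))
    rw [covariance_eq_sub (hL2 k) (hL2 k'), hmean k', mul_zero, sub_zero]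
    calc ∫ ω, w k ω * Y k ω * (w k' ω * Y k' ω) ∂μ
        = ∫ ω, w k ω * (w k' * (Y k * Y k')) ω ∂μ := by
          simp only [Pi.mul_apply, mul_assoc, mul_left_comm]
      _ = 0 := hind'.integral_mul_eq_zero (hw k).aestronglyMeasurable
          ((hw k').aestronglyMeasurable.mul ((hY k).aestronglyMeasurable.mul
            (hY k').aestronglyMeasurable)) (hw0 k)
  have hsum : (fun ω => ∑ k, w k ω * Y k ω) = ∑ k, w k * Y k := by
    ext ω
    simp
  refine ⟨hsum ▸ memLp_finsetSum' _ fun k _ => hL2 k, ?_, hsum ▸ ?_⟩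
  · rw [integral_finsetSum (f := fun k ω => w k ω * Y k ω) _
      fun k _ => (hL2 k).integrable one_le_two]
    exact Finset.sum_eq_zero fun k _ => hmean k
  · rw [variance_sum hL2]
    refine Finset.sum_congr rfl fun k _ => ?_
    rw [Finset.sum_eq_single k (fun k' _ hk' => hcov k k' (Ne.symm hk')) (by simp),
      covariance_self (hL2 k).aemeasurable]
    exact (hwY k).variance_mul_of_integral_eq_zero (hw k) (hY k) (hw0 k)

end ProbabilityTheory

section MLP

variable (d : ℕ → ℕ) (b : (l : ℕ) → Fin (d (l + 1)) → ℝ) (σ : ℝ → ℝ) (x : ℝ)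

lemma mlpPre_zero_apply (W : (l : ℕ) → Matrix (Fin (d (l + 1))) (Fin (d l)) ℝ) (i : Fin (d 1)) :
    mlpPre d W b σ 0 x i = ∑ k, W 0 i k * x + b 0 i := by
  simp [mlpPre, Matrix.mulVec, dotProduct]

lemma mlpPre_succ_apply (W : (l : ℕ) → Matrix (Fin (d (l + 1))) (Fin (d l)) ℝ) (l : ℕ)
    (i : Fin (d (l + 2))) :
    mlpPre d W b σ (l + 1) x i = ∑ k, W (l + 1) i k * σ (mlpPre d W b σ l x k) + b (l + 1) i := by
  simp [mlpPre, Matrix.mulVec, dotProduct]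

lemma jacProd_succ_apply (W : (l : ℕ) → Matrix (Fin (d (l + 1))) (Fin (d l)) ℝ) (l : ℕ)
    (i : Fin (d (l + 2))) (j : Fin (d 0)) :
    jacProd d W b σ x (l + 1) i j =
      ∑ k, W (l + 1) i k * (deriv σ (mlpPre d W b σ l x k) * jacProd d W b σ x l k j) := by
  simp [jacProd, Matrix.mul_apply, Matrix.diagonal_apply, mul_assoc]

variable {α : Type*} {mα : MeasurableSpace α}
  {V : (l : ℕ) → α → Matrix (Fin (d (l + 1))) (Fin (d l)) ℝ}

lemma measurable_mlpPre_apply {l : ℕ} (hV : ∀ n ≤ l, ∀ i j, Measurable fun a => V n a i j)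
    (hσ : Measurable σ) (i : Fin (d (l + 1))) :
    Measurable fun a => mlpPre d (fun n => V n a) b σ l x i := by
  induction l with
  | zero =>
    simp_rw [mlpPre_zero_apply]
    exact (Finset.measurable_sum _ fun k _ => (hV 0 le_rfl i k).mul_const x).add_const _
  | succ l ih =>
    simp_rw [mlpPre_succ_apply]
    refine (Finset.measurable_sum _ fun k _ => (hV (l + 1) le_rfl i k).mul ?_).add_const _
    exact hσ.comp (ih (fun n hn => hV n (hn.trans l.le_succ)) k)

lemma measurable_jacProd_apply {l : ℕ} (hV : ∀ n ≤ l, ∀ i j, Measurable fun a => V n a i j)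
    (hσ : Measurable σ) (hσ' : Measurable (deriv σ)) (i : Fin (d (l + 1))) (j : Fin (d 0)) :
    Measurable fun a => jacProd d (fun n => V n a) b σ x l i j := by
  induction l with
  | zero => exact hV 0 le_rfl i j
  | succ l ih =>
    have hV' : ∀ n ≤ l, ∀ i j, Measurable fun a => V n a i j :=
      fun n hn => hV n (hn.trans l.le_succ)
    simp_rw [jacProd_succ_apply]
    exact Finset.measurable_sum _ fun k _ => (hV (l + 1) le_rfl i k).mul
      ((hσ'.comp (measurable_mlpPre_apply d b σ x hV' hσ k)).mul (ih hV' k))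

end MLP

section RandomMLP

variable {Ω : Type*} [MeasurableSpace Ω] {μ : Measure Ω} [IsProbabilityMeasure μ]
  {L : ℕ} {d : ℕ → ℕ} {W : (l : ℕ) → Ω → Matrix (Fin (d (l + 1))) (Fin (d l)) ℝ}
  {b : (l : ℕ) → Fin (d (l + 1)) → ℝ} {σ : ℝ → ℝ}

theorem jacProd_succ_moments (hWmeas : ∀ l i j, Measurable fun ω => W l ω i j)
    (hWindep : iIndepFun (fun p : (l : Fin (L + 1)) × (Fin (d (l.1 + 1)) × Fin (d l.1)) =>
      fun ω => W p.1 ω p.2.1 p.2.2) μ)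
    (hσ : Measurable σ) (hσ' : Measurable (deriv σ)) (hσbound : ∀ t, |deriv σ t| ≤ 1) (x : ℝ)
    {l : ℕ} (hl : l + 1 ≤ L) (i : Fin (d (l + 2))) (j : Fin (d 0)) {v c : ℝ}
    (hW2 : ∀ k, MemLp (fun ω => W (l + 1) ω i k) 2 μ)
    (hW0 : ∀ k, ∫ ω, W (l + 1) ω i k ∂μ = 0)
    (hWvar : ∀ k, Var[fun ω => W (l + 1) ω i k; μ] ≤ v)
    (ih : ∀ k, MemLp (fun ω => jacProd d (fun n => W n ω) b σ x l k j) 2 μ ∧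
      ∫ ω, jacProd d (fun n => W n ω) b σ x l k j ∂μ = 0 ∧
      Var[fun ω => jacProd d (fun n => W n ω) b σ x l k j; μ] ≤ c) :
    MemLp (fun ω => jacProd d (fun n => W n ω) b σ x (l + 1) i j) 2 μ ∧
      ∫ ω, jacProd d (fun n => W n ω) b σ x (l + 1) i j ∂μ = 0 ∧
      Var[fun ω => jacProd d (fun n => W n ω) b σ x (l + 1) i j; μ] ≤ d (l + 1) * (v * c) := by
  set f := fun q : (n : Fin (L + 1)) × (Fin (d (n.1 + 1)) × Fin (d n.1)) =>
    fun ω => W q.1 ω q.2.1 q.2.2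
  let p (k : Fin (d (l + 1))) : (n : Fin (L + 1)) × (Fin (d (n.1 + 1)) × Fin (d n.1)) :=
    ⟨⟨l + 1, by omega⟩, (i, k)⟩
  let m (k : Fin (d (l + 1))) : MeasurableSpace Ω :=
    ⨆ q ≠ p k, MeasurableSpace.comap (f q) inferInstance
  have hm_le k : m k ≤ ‹MeasurableSpace Ω› := iSup₂_le fun q _ => (hWmeas _ _ _).comap_le
  have hlow k : ∀ n ≤ l, ∀ a a', Measurable[m k] fun ω => W n ω a a' := fun n hn a a' =>
    measurable_iSup_comap_of_ne f (j := ⟨⟨n, by omega⟩, (a, a')⟩) fun h => by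
      have := congrArg (fun q => q.1.1) h
      simp [p] at this
      omega
  set X := fun k ω => jacProd d (fun n => W n ω) b σ x l k j
  set Y := fun k ω => deriv σ (mlpPre d (fun n => W n ω) b σ l x k) * X k ω
  have hYm k k' : Measurable[m k] (Y k') :=
    (hσ'.comp (measurable_mlpPre_apply d b σ x (hlow k) hσ k')).mul
      (measurable_jacProd_apply d b σ x (hlow k) hσ hσ' k' j)
  have hY_le k ω : |Y k ω| ≤ |X k ω| := by
    simpa only [Y, abs_mul] using mul_le_of_le_one_left (abs_nonneg _) (hσbound _)
  have hY2 k : MemLp (Y k) 2 μ := (ih k).1.of_le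
    ((hYm k k).mono (hm_le k) le_rfl).aestronglyMeasurable (ae_of_all _ (hY_le k))
  have hYsq k : ∫ ω, Y k ω ^ 2 ∂μ ≤ c := calc
    ∫ ω, Y k ω ^ 2 ∂μ ≤ ∫ ω, X k ω ^ 2 ∂μ :=
      integral_mono (hY2 k).integrable_sq (ih k).1.integrable_sq fun ω => sq_le_sq.2 (hY_le k ω)
    _ = Var[X k; μ] := (variance_of_integral_eq_zero (ih k).1.aemeasurable (ih k).2.1).symm
    _ ≤ c := (ih k).2.2
  obtain ⟨hL2, hmean, hvar⟩ := moments_sum_mul_of_indep m hW2 hY2 hW0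
    (fun k => hWindep.indep_comap_iSup_ne (fun q => hWmeas _ _ _) (p k)) hYm
    fun k k' hkk' => measurable_iSup_comap_of_ne f (i := p k) (j := p k') (by simp [p, hkk'.symm])
  have hsucc : (fun ω => jacProd d (fun n => W n ω) b σ x (l + 1) i j) =
      fun ω => ∑ k, W (l + 1) ω i k * Y k ω :=
    funext fun ω => jacProd_succ_apply d b σ x _ l i j
  rw [hsucc]
  refine ⟨hL2, hmean, hvar ▸ ?_⟩
  calc ∑ k, Var[fun ω => W (l + 1) ω i k; μ] * ∫ ω, Y k ω ^ 2 ∂μ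
      ≤ ∑ _k : Fin (d (l + 1)), v * c := Finset.sum_le_sum fun k _ =>
        mul_le_mul (hWvar k) (hYsq k) (integral_nonneg fun ω => sq_nonneg (Y k ω))
          ((variance_nonneg _ _).trans (hWvar k))
    _ = d (l + 1) * (v * c) := by simp

end RandomMLP

theorem hidden_stack_gradient_variance_le_general
    {Ω : Type*} [MeasurableSpace Ω] (μ : Measure Ω) [IsProbabilityMeasure μ]
    (L m : ℕ) (hm : 1 ≤ m)
    (d : ℕ → ℕ)
    (hdm : ∀ l, 1 ≤ l → l ≤ L → d l = m)
    (W : (l : ℕ) → Ω → Matrix (Fin (d (l + 1))) (Fin (d l)) ℝ)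
    (hWmeas : ∀ l i j, Measurable fun ω => W l ω i j)
    (hWL2 : ∀ l i j, MemLp (fun ω => W l ω i j) 2 μ)
    (hWindep : iIndepFun
      (fun p : (l : Fin (L + 1)) × (Fin (d (l.1 + 1)) × Fin (d l.1)) =>
        fun ω => W p.1 ω p.2.1 p.2.2) μ)
    (hWmean : ∀ l, l ≤ L → ∀ i j, ∫ ω, W l ω i j ∂μ = 0)
    (hvarFirst : ∀ i j, variance (fun ω => W 0 ω i j) μ = 2 / (m + 1))
    (hvarMid : ∀ l, 1 ≤ l → l < L → ∀ i j, variance (fun ω => W l ω i j) μ = 1 / m)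
    (σ : ℝ → ℝ) (hσ : Differentiable ℝ σ)
    (hσ' : Measurable (deriv σ)) (hσbound : ∀ t, |deriv σ t| ≤ 1)
    (x : ℝ) :
    ∀ l, l < L → ∀ (i : Fin (d (l + 1))) (j : Fin (d 0)),
      MemLp (fun ω => jacProd d (fun k => W k ω) (fun _ => 0) σ x l i j) 2 μ ∧
      ∫ ω, jacProd d (fun k => W k ω) (fun _ => 0) σ x l i j ∂μ = 0 ∧
      variance (fun ω => jacProd d (fun k => W k ω) (fun _ => 0) σ x l i j) μ
        ≤ 2 / (m + 1) := by
  intro l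
  induction l with
  | zero => exact fun _ i j => ⟨hWL2 0 i j, hWmean 0 L.zero_le i j, (hvarFirst i j).le⟩
  | succ l ih =>
    intro hl i j
    have hwidth : (d (l + 1) : ℝ) * (1 / m * (2 / (m + 1))) = 2 / (m + 1) := by
      rw [hdm (l + 1) (by omega) (by omega)]
      field_simp
    rw [← hwidth]
    exact jacProd_succ_moments hWmeas hWindep hσ.continuous.measurable hσ' hσbound x hl.le i j
      (fun k => hWL2 _ i k) (fun k => hWmean _ hl.le i k)
      (fun k => (hvarMid _ (by omega) hl i k).le) (fun k => ih (by omega) k j)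

/-- For a randomly initialized MLP with scalar input and output, hidden
widths all equal to `m`, zero biases, jointly independent mean-zero square-integrable
weight entries where the entries of `W⁽¹⁾` have variance `2/(m+1)` and those of `W⁽ˡ⁾`
for `2 ≤ l ≤ L` have variance `1/m`, and a differentiable activation `σ` with measurable
derivative bounded by `1`, every component of the hidden-stack gradient
`X⁽ˡ⁾(x)` (for `l = 1,…,L`) is square-integrable, has mean zero, and has variance at most
`2/(m+1)`. -/
theorem hidden_stack_gradient_variance_le
    {Ω : Type*} [MeasurableSpace Ω] (μ : Measure Ω) [IsProbabilityMeasure μ]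
    (L m : ℕ) (hL : 1 ≤ L) (hm : 1 ≤ m)
    (d : ℕ → ℕ) (h0 : d 0 = 1) (hdL : d (L + 1) = 1)
    (hdm : ∀ l, 1 ≤ l → l ≤ L → d l = m)
    (W : (l : ℕ) → Ω → Matrix (Fin (d (l + 1))) (Fin (d l)) ℝ)
    (hWmeas : ∀ l i j, Measurable fun ω => W l ω i j)
    (hWL2 : ∀ l i j, MemLp (fun ω => W l ω i j) 2 μ)
    (hWindep : iIndepFun
      (fun p : (l : Fin (L + 1)) × (Fin (d (l.1 + 1)) × Fin (d l.1)) =>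
        fun ω => W p.1 ω p.2.1 p.2.2) μ)
    (hWmean : ∀ l, l ≤ L → ∀ i j, ∫ ω, W l ω i j ∂μ = 0)
    (hvarFirst : ∀ i j, variance (fun ω => W 0 ω i j) μ = 2 / (m + 1))
    (hvarMid : ∀ l, 1 ≤ l → l < L → ∀ i j, variance (fun ω => W l ω i j) μ = 1 / m)
    (σ : ℝ → ℝ) (hσ : Differentiable ℝ σ)
    (hσ' : Measurable (deriv σ)) (hσbound : ∀ t, |deriv σ t| ≤ 1)
    (x : ℝ) :
    ∀ l, l < L → ∀ (i : Fin (d (l + 1))) (j : Fin (d 0)),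
      MemLp (fun ω => jacProd d (fun k => W k ω) (fun _ => 0) σ x l i j) 2 μ ∧
      ∫ ω, jacProd d (fun k => W k ω) (fun _ => 0) σ x l i j ∂μ = 0 ∧
      variance (fun ω => jacProd d (fun k => W k ω) (fun _ => 0) σ x l i j) μ
        ≤ 2 / (m + 1) :=
  hidden_stack_gradient_variance_le_general μ L m hm d hdm W hWmeas hWL2 hWindep hWmean hvarFirst
    hvarMid σ hσ hσ' hσbound x
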